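/- arXiv:1902.07105 — 4 statements merged into one kernel-verified Lean document; each statement's English description precedes it below -/
import Mathlib

section
/- Let Φ be an irreducible root system with simple roots α_1, ..., α_r, and let β = Σ m_i α_i be a positive root of height greater than 1. For every index i with m_i = 1 there exists j ≠ i such that β - α_j is a root. -/
open scoped RealInnerProductSpace BigOperators Classical

noncomputable section

abbrev E (r : ℕ) := EuclideanSpace ℝ (Fin r)

/-- An irreducible (crystallographic) root system in Euclidean space `ℝ^r`, with a fixed
base of simple roots `α 1, …, α r`. -/
structure RootSystemData (r : ℕ) where
  Φ : Finset (E r)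
  α : Fin r → E r
  simple_mem : ∀ i, α i ∈ Φ
  indep : LinearIndependent ℝ α
  nonzero : ∀ β ∈ Φ, β ≠ (0 : E r)
  neg_mem : ∀ β ∈ Φ, -β ∈ Φ
  /-- integer coordinates of each root with respect to the simple roots -/
  coords : E r → Fin r → ℤ
  coords_spec : ∀ β ∈ Φ, β = ∑ i, (coords β i : ℝ) • α i
  pos_or_neg : ∀ β ∈ Φ, (∀ i, 0 ≤ coords β i) ∨ (∀ i, coords β i ≤ 0)
  cryst : ∀ β ∈ Φ, ∀ γ ∈ Φ, ∃ n : ℤ, 2 * ⟪β, γ⟫ / ⟪γ, γ⟫ = (n : ℝ)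
  refl_mem : ∀ β ∈ Φ, ∀ γ ∈ Φ, β - (2 * ⟪β, γ⟫ / ⟪γ, γ⟫) • γ ∈ Φ
  irred : ∀ s : Finset (E r), s ⊆ Φ → s.Nonempty →
    (∀ β ∈ s, ∀ γ ∈ Φ, γ ∉ s → ⟪β, γ⟫ = 0) → s = Φ

namespace RootSystemData

variable {r : ℕ} (R : RootSystemData r)

/-- `pairing x β = ⟨x, β^∨⟩ = 2⟨x,β⟩/⟨β,β⟩`. -/
def pairing (_R : RootSystemData r) (x β : E r) : ℝ := 2 * ⟪x, β⟫ / ⟪β, β⟫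

/-- The positive roots `Φ⁺`. -/
def posRoots : Finset (E r) := R.Φ.filter fun β => ∀ i, 0 ≤ R.coords β i

/-- The height of a root. -/
def height (β : E r) : ℤ := ∑ i, R.coords β i

/-- `ρ`, the half-sum of the positive roots. -/
def rho : E r := (2 : ℝ)⁻¹ • ∑ β ∈ R.posRoots, β

/-- `⟨I⟩⁺`, the positive roots supported on the set `I` of simple roots. -/
def suppRoots (I : Finset (Fin r)) : Finset (E r) :=
  R.posRoots.filter fun β => ∀ i, i ∉ I → R.coords β i = 0

/-- `Φ_P⁺ = Φ⁺ \ ⟨I⟩⁺`. -/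
def phiP (I : Finset (Fin r)) : Finset (E r) := R.posRoots \ R.suppRoots I

/-- An integral weight: pairs integrally with every simple coroot. -/
def IsIntegral (lam : E r) : Prop := ∀ i, ∃ n : ℤ, R.pairing lam (R.α i) = (n : ℝ)

/-- A `P`-regular dominant weight: `⟨λ, α^∨⟩ = 0` for `α ∈ I` and `⟨λ, α^∨⟩ > 0`
for simple `α ∉ I`. -/
def IsPRegular (I : Finset (Fin r)) (lam : E r) : Prop :=
  (∀ i ∈ I, R.pairing lam (R.α i) = 0) ∧ (∀ i ∉ I, 0 < R.pairing lam (R.α i))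

end RootSystemData

namespace RootSystemData

variable {r : ℕ} (R : RootSystemData r)

lemma coords_unique {β : E r} (hβ : β ∈ R.Φ) (c : Fin r → ℤ)
    (h : β = ∑ k, (c k : ℝ) • R.α k) : R.coords β = c := by
  have h2 := R.coords_spec β hβ
  have h3 : ∑ k, ((R.coords β k : ℝ) - (c k : ℝ)) • R.α k = 0 := by
    simp only [sub_smul, Finset.sum_sub_distrib]
    rw [← h2, ← h, sub_self]
  have h4 := Fintype.linearIndependent_iff.mp R.indep _ h3
  funext k
  have h5 := h4 k
  have h6 : (R.coords β k : ℝ) = (c k : ℝ) := by linarith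
  exact_mod_cast h6

lemma simple_coords (k : Fin r) :
    R.coords (R.α k) = fun l => if l = k then 1 else 0 := by
  apply R.coords_unique (R.simple_mem k)
  push_cast
  rw [show ∑ l, (if l = k then (1:ℝ) else 0) • R.α l
      = ∑ l, (if l = k then R.α l else 0) from by
    apply Finset.sum_congr rfl; intro l _; split <;> simp]
  simp

lemma inner_self_pos' {x : E r} (hx : x ≠ 0) : 0 < ⟪x, x⟫ := by
  rw [real_inner_self_eq_norm_sq]
  have h : 0 < ‖x‖ := norm_pos_iff.mpr hx
  positivity

lemma inner_coords {β : E r} (hβ : β ∈ R.Φ) (x : E r) :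
    ⟪x, β⟫ = ∑ k, (R.coords β k : ℝ) * ⟪x, R.α k⟫ := by
  conv_lhs => rw [R.coords_spec β hβ]
  rw [inner_sum]
  simp only [real_inner_smul_right]

lemma exists_pos_coord_inner {ζ : E r} (hζ : ζ ∈ R.Φ) (hc : ∀ k, 0 ≤ R.coords ζ k) :
    ∃ k, 0 < R.coords ζ k ∧ 0 < ⟪ζ, R.α k⟫ := by
  by_contra hcon
  push_neg at hcon
  have h0 : 0 < ⟪ζ, ζ⟫ := inner_self_pos' (R.nonzero ζ hζ)
  have hexp := R.inner_coords hζ ζ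
  have hle : ∑ k, (R.coords ζ k : ℝ) * ⟪ζ, R.α k⟫ ≤ 0 := by
    apply Finset.sum_nonpos
    intro k _
    rcases eq_or_lt_of_le (hc k) with h | h
    · rw [← h]; simp
    · have h7 := hcon k h
      have hck : (0:ℝ) ≤ (R.coords ζ k : ℝ) := by exact_mod_cast hc k
      have h8 := mul_le_mul_of_nonneg_left h7 hck
      simpa using h8
  rw [hexp] at h0
  linarith

lemma sub_mem {ξ η : E r} (hξ : ξ ∈ R.Φ) (hη : η ∈ R.Φ) (hpos : 0 < ⟪ξ, η⟫)
    (hne : ξ ≠ η) : ξ - η ∈ R.Φ := by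
  have hP : 0 < ⟪ξ, ξ⟫ := inner_self_pos' (R.nonzero ξ hξ)
  have hQ : 0 < ⟪η, η⟫ := inner_self_pos' (R.nonzero η hη)
  obtain ⟨a, ha⟩ := R.cryst ξ hξ η hη
  obtain ⟨b, hb⟩ := R.cryst η hη ξ hξ
  have hcomm : ⟪η, ξ⟫ = ⟪ξ, η⟫ := real_inner_comm ξ η
  have ha0 : 0 < a := by
    have h : (0:ℝ) < (a:ℝ) := by rw [← ha]; exact div_pos (by linarith) hQ
    exact_mod_cast h
  have hb0 : 0 < b := by
    have h : (0:ℝ) < (b:ℝ) := by rw [← hb, hcomm]; exact div_pos (by linarith) hP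
    exact_mod_cast h
  have ha' : 2 * ⟪ξ, η⟫ = (a:ℝ) * ⟪η, η⟫ := by
    rw [← ha, div_mul_cancel₀ _ (ne_of_gt hQ)]
  have hb' : 2 * ⟪ξ, η⟫ = (b:ℝ) * ⟪ξ, ξ⟫ := by
    rw [← hb, hcomm, div_mul_cancel₀ _ (ne_of_gt hP)]
  have hCS : ⟪ξ, η⟫ * ⟪ξ, η⟫ ≤ ⟪ξ, ξ⟫ * ⟪η, η⟫ := real_inner_mul_inner_self_le ξ η
  rcases lt_or_eq_of_le hCS with hlt | heq
  · -- strict Cauchy-Schwarz case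
    have hab : a * b < 4 := by
      have h4 : ((a:ℝ)) * (b:ℝ) * (⟪η, η⟫ * ⟪ξ, ξ⟫) = 4 * (⟪ξ, η⟫ * ⟪ξ, η⟫) := by
        nlinarith [ha', hb']
      have h5 : ((a * b : ℤ) : ℝ) < 4 := by push_cast; nlinarith
      exact_mod_cast h5
    have hor : a = 1 ∨ b = 1 := by
      by_contra hcon
      push_neg at hcon
      have h1 : 2 ≤ a := by omega
      have h2 : 2 ≤ b := by omega
      nlinarith
    rcases hor with h1 | h1
    · have hr := R.refl_mem ξ hξ η hη
      rw [ha, h1] at hr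
      simpa using hr
    · have hr := R.refl_mem η hη ξ hξ
      rw [hb, h1] at hr
      simp only [Int.cast_one, one_smul] at hr
      have := R.neg_mem _ hr
      simpa [neg_sub] using this
  · -- parallel case
    have hw : ⟪η, η⟫ • ξ - ⟪ξ, η⟫ • η = 0 := by
      have hin : ⟪(⟪η, η⟫ • ξ - ⟪ξ, η⟫ • η), (⟪η, η⟫ • ξ - ⟪ξ, η⟫ • η)⟫ = 0 := by
        simp only [inner_sub_left, inner_sub_right, real_inner_smul_left,
          real_inner_smul_right, real_inner_comm ξ η]
        nlinarith [heq]
      exact inner_self_eq_zero.mp hin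
    have hxi0 : ξ = (⟪ξ, η⟫ / ⟪η, η⟫) • η := by
      have h8 : ⟪η, η⟫ • ξ = ⟪ξ, η⟫ • η := by rwa [sub_eq_zero] at hw
      have h9 : (⟪η, η⟫)⁻¹ • (⟪η, η⟫ • ξ) = (⟪η, η⟫)⁻¹ • (⟪ξ, η⟫ • η) := by rw [h8]
      rw [smul_smul, smul_smul, inv_mul_cancel₀ (ne_of_gt hQ), one_smul] at h9
      rw [div_eq_inv_mul, ← smul_smul]
      rw [← smul_smul] at h9
      exact h9
    obtain ⟨c, hc, hxi⟩ : ∃ c : ℝ, c = ⟪ξ, η⟫ / ⟪η, η⟫ ∧ ξ = c • η := ⟨_, rfl, hxi0⟩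
    have hcpos : 0 < c := by rw [hc]; exact div_pos hpos hQ
    have hXieta : ⟪ξ, η⟫ = c * ⟪η, η⟫ := by
      rw [hc]
      exact (div_mul_cancel₀ _ (ne_of_gt hQ)).symm
    have hXiXi : ⟪ξ, ξ⟫ = c * c * ⟪η, η⟫ := by
      conv_lhs => rw [hxi]
      rw [real_inner_smul_left, real_inner_smul_right]
      ring
    have hbc : (b:ℝ) * c = 2 := by
      have h1 : 2 * (c * ⟪η, η⟫) = (b:ℝ) * (c * c * ⟪η, η⟫) := by
        rw [← hXieta, ← hXiXi]; exact hb'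
      have h2 : ((b:ℝ) * c - 2) * (c * ⟪η, η⟫) = 0 := by linear_combination -h1
      have h3 : c * ⟪η, η⟫ ≠ 0 := by positivity
      have h4 := (mul_eq_zero.mp h2).resolve_right h3
      linarith
    have hac : (a:ℝ) = 2 * c := by
      have h1 : 2 * (c * ⟪η, η⟫) = (a:ℝ) * ⟪η, η⟫ := by rw [← hXieta]; exact ha'
      have h2 : ((a:ℝ) - 2 * c) * ⟪η, η⟫ = 0 := by linear_combination -h1
      have h4 := (mul_eq_zero.mp h2).resolve_right (ne_of_gt hQ)
      linarith
    have hab4 : a * b = 4 := by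
      have h4 : ((a * b : ℤ) : ℝ) = 4 := by
        push_cast
        linear_combination (b:ℝ) * hac + 2 * hbc
      exact_mod_cast h4
    have hb14 : b = 1 ∨ b = 2 ∨ b = 4 := by
      have hble : b ≤ 4 := by nlinarith
      interval_cases b <;> omega
    rcases hb14 with h1 | h1 | h1
    · -- c = 2, ξ = 2 η, ξ - η = η
      have hc2 : c = 2 := by rw [h1] at hbc; norm_num at hbc; linarith
      have hz : ξ - η = η := by rw [hxi, hc2]; module
      rw [hz]; exact hη
    · -- c = 1, ξ = η: contradiction
      exfalso
      have hc1 : c = 1 := by rw [h1] at hbc; norm_num at hbc; linarith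
      exact hne (by rw [hxi, hc1, one_smul])
    · -- c = 1/2, ξ - η = -ξ
      have hc12 : c = 1/2 := by rw [h1] at hbc; norm_num at hbc; linarith
      have hz : ξ - η = -ξ := by rw [hxi, hc12]; module
      rw [hz]
      exact R.neg_mem ξ hξ

lemma coords_sub_simple {ζ : E r} (hζ : ζ ∈ R.Φ) (k : Fin r) (h : ζ - R.α k ∈ R.Φ) :
    R.coords (ζ - R.α k) = fun l => R.coords ζ l - if l = k then 1 else 0 := by
  apply R.coords_unique h
  have e1 : ∀ l, (((R.coords ζ l - if l = k then 1 else 0 : ℤ)) : ℝ) • R.α l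
      = (R.coords ζ l : ℝ) • R.α l - (if l = k then R.α l else 0) := by
    intro l; split <;> simp [sub_smul]
  rw [show (∑ l, (((fun l => R.coords ζ l - if l = k then 1 else 0) l : ℤ) : ℝ) • R.α l)
      = ∑ l, ((R.coords ζ l : ℝ) • R.α l - (if l = k then R.α l else 0)) from
    Finset.sum_congr rfl (fun l _ => e1 l)]
  rw [Finset.sum_sub_distrib, ← R.coords_spec ζ hζ, Finset.sum_ite_eq' Finset.univ k]
  simp

lemma key (i : Fin r) {β : E r} (hβ : β ∈ R.Φ) (hmi : R.coords β i = 1) :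
    ∀ (n : ℕ) (ζ : E r), ζ ∈ R.Φ → (∀ k, 0 ≤ R.coords ζ k) → R.coords ζ i = 0 →
      R.height ζ ≤ (n : ℤ) → ∀ ψ : E r, ψ ∈ R.Φ → ψ + ζ = β →
      ∃ j, j ≠ i ∧ β - R.α j ∈ R.Φ := by
  intro n
  induction n with
  | zero =>
    intro ζ hζ hc h0 hht ψ hψ hsum
    exfalso
    obtain ⟨k, hk1, _⟩ := R.exists_pos_coord_inner hζ hc
    have hle : R.coords ζ k ≤ R.height ζ :=
      Finset.single_le_sum (fun l _ => hc l) (Finset.mem_univ k)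
    simp only [Nat.cast_zero] at hht
    omega
  | succ n ih =>
    intro ζ hζ hc h0 hht ψ hψ hsum
    obtain ⟨k, hk1, hk2⟩ := R.exists_pos_coord_inner hζ hc
    have hki : k ≠ i := by intro h; rw [h] at hk1; omega
    by_cases hbk : 0 < ⟪β, R.α k⟫
    · refine ⟨k, hki, R.sub_mem hβ (R.simple_mem k) hbk ?_⟩
      intro heq
      have hco : R.coords β = fun l => if l = k then 1 else 0 := by
        rw [heq]; exact R.simple_coords k
      have h2 := congrFun hco i
      rw [hmi, if_neg (Ne.symm hki)] at h2
      exact one_ne_zero h2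
    · by_cases hζk : ζ = R.α k
      · refine ⟨k, hki, ?_⟩
        have hz : β - R.α k = ψ := by rw [← hsum, hζk]; abel
        rw [hz]; exact hψ
      · have hζ' : ζ - R.α k ∈ R.Φ := R.sub_mem hζ (R.simple_mem k) hk2 hζk
        have hcζ' := R.coords_sub_simple hζ k hζ'
        have hψne : ψ ≠ -R.α k := by
          intro h
          have hβeq : β = ζ - R.α k := by rw [← hsum, h]; abel
          have h3 : R.coords β i = 0 := by
            rw [hβeq, hcζ']
            simp only [if_neg (Ne.symm hki), h0, sub_zero]
          omega
        have hψk : ⟪ψ, R.α k⟫ < 0 := by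
          have hψeq : ψ = β - ζ := by rw [← hsum]; abel
          have hb' : ⟪β, R.α k⟫ ≤ 0 := not_lt.mp hbk
          rw [hψeq, inner_sub_left]
          linarith
        have hψ' : ψ + R.α k ∈ R.Φ := by
          have h1 : 0 < ⟪ψ, -R.α k⟫ := by rw [inner_neg_right]; linarith
          have h2 := R.sub_mem hψ (R.neg_mem _ (R.simple_mem k)) h1 hψne
          simpa [sub_neg_eq_add] using h2
        apply ih (ζ - R.α k) hζ' ?_ ?_ ?_ (ψ + R.α k) hψ' ?_
        · intro l
          rw [hcζ']
          dsimp only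
          split_ifs with h
          · subst h; omega
          · simpa using hc l
        · rw [hcζ']
          dsimp only
          rw [if_neg (Ne.symm hki), h0]
          ring
        · have hhts : R.height (ζ - R.α k) = R.height ζ - 1 := by
            simp only [height, hcζ']
            rw [Finset.sum_sub_distrib]
            simp [Finset.sum_ite_eq']
          rw [hhts]
          push_cast at hht ⊢
          linarith
        · rw [← hsum]; abel

end RootSystemData



/-- Lemma on roots: if `β` is a positive root of height `> 1` and the coefficient of the
simple root `α i` in `β` is `1`, then there is `j ≠ i` with `β - α j` a root. -/
theorem stmt1 {r : ℕ} (R : RootSystemData r) (β : E r) (hβ : β ∈ R.posRoots)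
    (hht : 1 < R.height β) (i : Fin r) (hi : R.coords β i = 1) :
    ∃ j : Fin r, j ≠ i ∧ β - R.α j ∈ R.Φ := by
  obtain ⟨hβΦ, hcpos⟩ := Finset.mem_filter.mp hβ
  obtain ⟨k, hk1, hk2⟩ := R.exists_pos_coord_inner hβΦ hcpos
  have hne : ∀ l, β ≠ R.α l := by
    intro l heq
    have hco : R.coords β = fun m => if m = l then 1 else 0 := by
      rw [heq]; exact R.simple_coords l
    have hh : R.height β = 1 := by
      simp [RootSystemData.height, hco, Finset.sum_ite_eq']
    omega
  by_cases hk : k = i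
  · rw [hk] at hk2
    have hγΦ : β - R.α i ∈ R.Φ := R.sub_mem hβΦ (R.simple_mem i) hk2 (hne i)
    have hcγ := R.coords_sub_simple hβΦ i hγΦ
    apply R.key i hβΦ hi (R.height (β - R.α i)).toNat (β - R.α i) hγΦ ?_ ?_ ?_
      (R.α i) (R.simple_mem i) (by abel)
    · intro l
      rw [hcγ]
      dsimp only
      split_ifs with h
      · subst h; omega
      · simpa using hcpos l
    · rw [hcγ]
      dsimp only
      simp [hi]
    · exact Int.self_le_toNat _
  · exact ⟨k, hk, R.sub_mem hβΦ (R.simple_mem k) hk2 (hne k)⟩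
end
end

section
/- Let λ = ρ + w_I(ρ) be the anticanonical weight of G/P. Then for every natural number n, Π_{β ∈ Φ_P⁺} ⟨(n+1)λ - ρ, β^∨⟩ / ⟨ρ, β^∨⟩ = Π_{β ∈ Φ_P⁺} ⟨nλ + ρ, β^∨⟩ / ⟨ρ, β^∨⟩. -/
open scoped RealInnerProductSpace BigOperators Classical

noncomputable section

/-- A root system together with the simple reflections realized as linear automorphisms. -/
structure RootSystemW (r : ℕ) extends RootSystemData r where
  s : Fin r → (E r ≃ₗ[ℝ] E r)
  s_apply : ∀ i x, s i x = x - (2 * ⟪x, α i⟫ / ⟪α i, α i⟫) • α i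

namespace RootSystemW

variable {r : ℕ} (R : RootSystemW r)

/-- The parabolic subgroup `W_I` of the Weyl group, generated by the simple
reflections `s_α` for `α ∈ I`. -/
def WI (I : Finset (Fin r)) : Subgroup (E r ≃ₗ[ℝ] E r) :=
  Subgroup.closure (R.s '' (I : Set (Fin r)))

/-- The number of inversions of `u` within the root subsystem `⟨I⟩⁺`. -/
def numInv (I : Finset (Fin r)) (u : E r ≃ₗ[ℝ] E r) : ℕ :=
  ((R.toRootSystemData.suppRoots I).filter
    fun β => u β ∉ R.toRootSystemData.posRoots).card

/-- `w` is the longest element of `W_I`: it lies in `W_I` and maximizes the number of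
inversions among elements of `W_I`. -/
def IsLongest (I : Finset (Fin r)) (w : E r ≃ₗ[ℝ] E r) : Prop :=
  w ∈ R.WI I ∧ ∀ u ∈ R.WI I, R.numInv I u ≤ R.numInv I w

end RootSystemW


namespace RootSystemData

variable {r : ℕ} (D : RootSystemData r)

lemma inner_simple_ne (i : Fin r) : ⟪D.α i, D.α i⟫ ≠ 0 := fun h =>
  D.nonzero _ (D.simple_mem i) (inner_self_eq_zero.mp h)

lemma coords_unique_s7 {β : E r} (hβ : β ∈ D.Φ) (c : Fin r → ℝ)
    (h : β = ∑ i, c i • D.α i) : ∀ i, (D.coords β i : ℝ) = c i := by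
  have h2 := D.coords_spec β hβ
  have h3 : ∑ i, ((D.coords β i : ℝ) - c i) • D.α i = 0 := by
    simp only [sub_smul, Finset.sum_sub_distrib, ← h2, ← h, sub_self]
  intro i
  have := Fintype.linearIndependent_iff.mp D.indep _ h3 i
  linarith

lemma mem_posRoots {β : E r} :
    β ∈ D.posRoots ↔ β ∈ D.Φ ∧ ∀ i, 0 ≤ D.coords β i := Finset.mem_filter

lemma pos_of_coord_pos {β : E r} (hβ : β ∈ D.Φ) {j : Fin r}
    (h : 0 < D.coords β j) : β ∈ D.posRoots := by
  rcases D.pos_or_neg β hβ with h' | h'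
  · exact D.mem_posRoots.mpr ⟨hβ, h'⟩
  · exact absurd (h' j) (by omega)

lemma coords_nonpos_of_not_pos {β : E r} (hβ : β ∈ D.Φ) (h : β ∉ D.posRoots) :
    ∀ i, D.coords β i ≤ 0 := by
  rcases D.pos_or_neg β hβ with h' | h'
  · exact absurd (D.mem_posRoots.mpr ⟨hβ, h'⟩) h
  · exact h'

lemma eq_zero_of_coords_zero {β : E r} (hβ : β ∈ D.Φ)
    (h : ∀ i, D.coords β i = 0) : False := by
  apply D.nonzero β hβ
  rw [D.coords_spec β hβ]
  simp [h]

lemma coords_neg {β : E r} (hβ : β ∈ D.Φ) (i : Fin r) :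
    D.coords (-β) i = - D.coords β i := by
  have h : -β = ∑ i, (-(D.coords β i) : ℝ) • D.α i := by
    nth_rewrite 1 [D.coords_spec β hβ]
    simp [neg_smul, Finset.sum_neg_distrib]
  have := D.coords_unique_s7 (D.neg_mem β hβ) _ h i
  exact_mod_cast this

lemma coords_simple (i j : Fin r) :
    D.coords (D.α i) j = if j = i then 1 else 0 := by
  have h : D.α i = ∑ k, (if k = i then (1:ℝ) else 0) • D.α k := by
    simp [ite_smul]
  have := D.coords_unique_s7 (D.simple_mem i) _ h j
  split_ifs with hji
  · subst hji; simp at this; exact_mod_cast this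
  · simp [hji] at this; exact_mod_cast this

lemma mem_suppRoots {I : Finset (Fin r)} {β : E r} :
    β ∈ D.suppRoots I ↔ β ∈ D.Φ ∧ (∀ i, 0 ≤ D.coords β i) ∧ ∀ j ∉ I, D.coords β j = 0 := by
  unfold suppRoots
  rw [Finset.mem_filter, mem_posRoots]
  tauto

lemma mem_phiP {I : Finset (Fin r)} {β : E r} :
    β ∈ D.phiP I ↔ β ∈ D.Φ ∧ (∀ i, 0 ≤ D.coords β i) ∧ ∃ j, j ∉ I ∧ 0 < D.coords β j := by
  unfold phiP
  rw [Finset.mem_sdiff, mem_posRoots, mem_suppRoots]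
  constructor
  · rintro ⟨⟨h1, h2⟩, h3⟩
    refine ⟨h1, h2, ?_⟩
    by_contra hc
    push_neg at hc
    exact h3 ⟨h1, h2, fun j hj => le_antisymm (hc j hj) (h2 j)⟩
  · rintro ⟨h1, h2, j, hj, hjpos⟩
    exact ⟨⟨h1, h2⟩, fun ⟨_, _, h4⟩ => by have := h4 j hj; omega⟩

end RootSystemData


namespace RootSystemW

variable {r : ℕ} (R : RootSystemW r) {I : Finset (Fin r)}

lemma WI_inner {u : E r ≃ₗ[ℝ] E r} (hu : u ∈ R.WI I) :
    ∀ x y : E r, ⟪u x, u y⟫ = ⟪x, y⟫ := by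
  refine Subgroup.closure_induction ?_ ?_ ?_ ?_ hu
  · rintro g ⟨i, hi, rfl⟩ x y
    rw [R.s_apply, R.s_apply]
    have h := R.toRootSystemData.inner_simple_ne i
    simp only [inner_sub_left, inner_sub_right, real_inner_smul_left, real_inner_smul_right]
    rw [real_inner_comm (R.α i) y, real_inner_comm (R.α i) x]
    set a := ⟪x, R.α i⟫ with ha
    set b := ⟪y, R.α i⟫ with hb
    set c := ⟪R.α i, R.α i⟫ with hc
    field_simp
    ring
  · intro x y; rfl
  · intro g h _ _ hg hh x y
    have : ∀ z, (g * h) z = g (h z) := fun _ => rfl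
    rw [this, this, hg, hh]
  · intro g _ hg x y
    have := hg (g⁻¹ x) (g⁻¹ y)
    have e1 : g (g⁻¹ x) = x := g.apply_symm_apply x
    have e2 : g (g⁻¹ y) = y := g.apply_symm_apply y
    rw [e1, e2] at this
    exact this.symm

lemma WI_image_phi {u : E r ≃ₗ[ℝ] E r} (hu : u ∈ R.WI I) :
    R.Φ.image u = R.Φ := by
  refine Subgroup.closure_induction ?_ ?_ ?_ ?_ hu
  · rintro g ⟨i, hi, rfl⟩
    have hsub : R.Φ.image (R.s i) ⊆ R.Φ := by
      intro x hx
      obtain ⟨β, hβ, rfl⟩ := Finset.mem_image.mp hx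
      rw [R.s_apply]
      exact R.refl_mem β hβ _ (R.simple_mem i)
    exact Finset.eq_of_subset_of_card_le hsub
      (le_of_eq (Finset.card_image_of_injective _ (R.s i).injective).symm)
  · simp [Finset.image_id (s := R.Φ)]
  · intro g h _ _ hg hh
    have : R.Φ.image ⇑(g * h) = (R.Φ.image ⇑h).image ⇑g := by
      rw [Finset.image_image]; rfl
    rw [this, hh, hg]
  · intro g _ hg
    have := congrArg (Finset.image ⇑g⁻¹) hg
    rw [Finset.image_image, show (⇑g⁻¹ ∘ ⇑g) = id from funext fun x => g.symm_apply_apply x,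
      Finset.image_id] at this
    exact this.symm

lemma WI_maps_phi {u : E r ≃ₗ[ℝ] E r} (hu : u ∈ R.WI I) {β : E r} (hβ : β ∈ R.Φ) :
    u β ∈ R.Φ := by
  rw [← R.WI_image_phi hu]
  exact Finset.mem_image_of_mem _ hβ

lemma coords_s (i : Fin r) {β : E r} (hβ : β ∈ R.Φ) :
    R.s i β ∈ R.Φ ∧ ∀ j, j ≠ i → R.coords (R.s i β) j = R.coords β j := by
  have hmem : R.s i β ∈ R.Φ := by
    rw [R.s_apply]; exact R.refl_mem β hβ _ (R.simple_mem i)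
  obtain ⟨n, hn⟩ := R.cryst β hβ (R.α i) (R.simple_mem i)
  have key : R.s i β = ∑ k, ((R.coords β k : ℝ) - (if k = i then (n : ℝ) else 0)) • R.α k := by
    rw [R.s_apply, hn]
    nth_rewrite 1 [R.coords_spec β hβ]
    simp [sub_smul, Finset.sum_sub_distrib, ite_smul]
  refine ⟨hmem, fun j hj => ?_⟩
  have := R.toRootSystemData.coords_unique_s7 hmem _ key j
  simp [hj] at this
  exact_mod_cast this

lemma WI_coords {u : E r ≃ₗ[ℝ] E r} (hu : u ∈ R.WI I) :
    ∀ β ∈ R.Φ, ∀ j ∉ I, R.coords (u β) j = R.coords β j := by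
  refine Subgroup.closure_induction ?_ ?_ ?_ ?_ hu
  · rintro g ⟨i, hi, rfl⟩ β hβ j hj
    exact (R.coords_s i hβ).2 j (fun h => hj (h ▸ hi))
  · intro β _ j _; rfl
  · intro g h hg' hh' hg hh β hβ j hj
    have : (g * h) β = g (h β) := rfl
    rw [this, hg _ (R.WI_maps_phi hh' hβ) j hj, hh _ hβ j hj]
  · intro g hg' hg β hβ j hj
    have hβ' : g⁻¹ β ∈ R.Φ := R.WI_maps_phi (inv_mem hg') hβ
    have := hg _ hβ' j hj
    rw [show g (g⁻¹ β) = β from g.apply_symm_apply β] at this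
    exact this.symm

lemma WI_maps_phiP {u : E r ≃ₗ[ℝ] E r} (hu : u ∈ R.WI I) {β : E r}
    (hβ : β ∈ R.toRootSystemData.phiP I) : u β ∈ R.toRootSystemData.phiP I := by
  rw [RootSystemData.mem_phiP] at hβ ⊢
  obtain ⟨h1, h2, j, hj, hjpos⟩ := hβ
  have humem : u β ∈ R.Φ := R.WI_maps_phi hu h1
  have hc : R.coords (u β) j = R.coords β j := R.WI_coords hu β h1 j hj
  have hpos : u β ∈ R.toRootSystemData.posRoots :=
    R.toRootSystemData.pos_of_coord_pos humem (j := j) (by omega)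
  exact ⟨humem, (R.toRootSystemData.mem_posRoots.mp hpos).2, j, hj, by omega⟩

lemma WI_image_phiP {u : E r ≃ₗ[ℝ] E r} (hu : u ∈ R.WI I) :
    (R.toRootSystemData.phiP I).image u = R.toRootSystemData.phiP I := by
  apply Finset.eq_of_subset_of_card_le
  · intro x hx
    obtain ⟨β, hβ, rfl⟩ := Finset.mem_image.mp hx
    exact R.WI_maps_phiP hu hβ
  · exact le_of_eq (Finset.card_image_of_injective _ u.injective).symm

end RootSystemW


namespace RootSystemW

variable {r : ℕ} (R : RootSystemW r) {I : Finset (Fin r)}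

lemma longest_neg {w : E r ≃ₗ[ℝ] E r} (hw : R.IsLongest I w) :
    ∀ β ∈ R.toRootSystemData.suppRoots I, w β ∉ R.toRootSystemData.posRoots := by
  by_contra hcon
  push_neg at hcon
  obtain ⟨β₀, hβ₀, hwβ₀⟩ := hcon
  have step1 : ∃ i ∈ I, w (R.α i) ∈ R.toRootSystemData.posRoots := by
    by_contra hno
    push_neg at hno
    obtain ⟨hβΦ, hβnn, hβsupp⟩ := R.toRootSystemData.mem_suppRoots.mp hβ₀
    have hwβΦ : w β₀ ∈ R.Φ := R.WI_maps_phi hw.1 hβΦ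
    have hrep : w β₀
        = ∑ j, (∑ i, (R.coords β₀ i : ℝ) * (R.coords (w (R.α i)) j : ℝ)) • R.α j := by
      calc w β₀ = w (∑ i, (R.coords β₀ i : ℝ) • R.α i) := by rw [← R.coords_spec β₀ hβΦ]
        _ = ∑ i, (R.coords β₀ i : ℝ) • w (R.α i) := by rw [map_sum]; simp
        _ = ∑ i, (R.coords β₀ i : ℝ) • ∑ j, (R.coords (w (R.α i)) j : ℝ) • R.α j := by
            refine Finset.sum_congr rfl fun i _ => ?_
            rw [← R.coords_spec _ (R.WI_maps_phi hw.1 (R.simple_mem i))]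
        _ = ∑ j, (∑ i, (R.coords β₀ i : ℝ) * (R.coords (w (R.α i)) j : ℝ)) • R.α j := by
            simp_rw [Finset.smul_sum, smul_smul]
            rw [Finset.sum_comm]
            simp_rw [Finset.sum_smul]
    have hnonpos : ∀ j, (R.coords (w β₀) j : ℝ) ≤ 0 := by
      intro j
      rw [R.toRootSystemData.coords_unique_s7 hwβΦ _ hrep j]
      apply Finset.sum_nonpos
      intro i _
      by_cases hiI : i ∈ I
      · have h1 : (0:ℝ) ≤ (R.coords β₀ i : ℝ) := by exact_mod_cast hβnn i
        have h2 : (R.coords (w (R.α i)) j : ℝ) ≤ 0 := by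
          have := R.toRootSystemData.coords_nonpos_of_not_pos
            (R.WI_maps_phi hw.1 (R.simple_mem i)) (hno i hiI) j
          exact_mod_cast this
        exact mul_nonpos_of_nonneg_of_nonpos h1 h2
      · simp [hβsupp i hiI]
    have hge := (R.toRootSystemData.mem_posRoots.mp hwβ₀).2
    apply R.toRootSystemData.eq_zero_of_coords_zero hwβΦ
    intro j
    have h1 : R.coords (w β₀) j ≤ 0 := by exact_mod_cast hnonpos j
    have h2 := hge j
    omega
  obtain ⟨i, hiI, hwαi⟩ := step1
  have hsiW : R.s i ∈ R.WI I := Subgroup.subset_closure ⟨i, hiI, rfl⟩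
  have hwsiW : w * R.s i ∈ R.WI I := mul_mem hw.1 hsiW
  set S := R.toRootSystemData.suppRoots I with hS
  set M := S.filter (fun β => ∀ j, j ≠ i → R.coords β j = 0) with hM
  have hMS : M ⊆ S := Finset.filter_subset _ _
  have hαiM : R.α i ∈ M := by
    rw [hM, Finset.mem_filter]
    refine ⟨?_, fun j hj => by rw [R.toRootSystemData.coords_simple]; simp [hj]⟩
    rw [hS, RootSystemData.mem_suppRoots]
    refine ⟨R.simple_mem i, fun k => ?_, fun j hj => ?_⟩
    · rw [R.toRootSystemData.coords_simple]; split <;> omega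
    · rw [R.toRootSystemData.coords_simple]
      simp [show j ≠ i from fun h => hj (h ▸ hiI)]
  have hMfacts : ∀ β ∈ M, R.s i β = -β ∧ w β ∈ R.toRootSystemData.posRoots ∧
      w (R.s i β) ∉ R.toRootSystemData.posRoots := by
    intro β hβM
    obtain ⟨hβS, hβloc⟩ := Finset.mem_filter.mp hβM
    rw [hS, RootSystemData.mem_suppRoots] at hβS
    obtain ⟨hβΦ, hβnn, _⟩ := hβS
    have hβeq : β = ((R.coords β i : ℝ)) • R.α i := by
      nth_rewrite 1 [R.coords_spec β hβΦ]
      rw [Finset.sum_eq_single i]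
      · intro k _ hk; rw [hβloc k hk]; simp
      · intro h; exact absurd (Finset.mem_univ i) h
    have hc0 : R.coords β i ≠ 0 := by
      intro h0
      apply R.toRootSystemData.eq_zero_of_coords_zero hβΦ
      intro j
      by_cases hji : j = i
      · rw [hji, h0]
      · exact hβloc j hji
    have hcpos : 0 < R.coords β i := lt_of_le_of_ne (hβnn i) (Ne.symm hc0)
    have hsi : R.s i β = -β := by
      have hne := R.toRootSystemData.inner_simple_ne i
      have hinner : ⟪β, R.α i⟫ = (R.coords β i : ℝ) * ⟪R.α i, R.α i⟫ := by
        nth_rewrite 1 [hβeq]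
        rw [real_inner_smul_left]
      have hco : (2 * ⟪β, R.α i⟫ / ⟪R.α i, R.α i⟫) = 2 * (R.coords β i : ℝ) := by
        rw [hinner]
        set t := ⟪R.α i, R.α i⟫ with ht
        field_simp
      obtain ⟨c, hceq⟩ : ∃ c : ℝ, c = (R.coords β i : ℝ) := ⟨_, rfl⟩
      rw [← hceq] at hβeq
      rw [R.s_apply, hco, ← hceq, hβeq]
      module
    have hwαΦ : w (R.α i) ∈ R.Φ := R.WI_maps_phi hw.1 (R.simple_mem i)
    have hwβΦ : w β ∈ R.Φ := R.WI_maps_phi hw.1 hβΦ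
    have hwβrep : w β = (R.coords β i : ℝ) • w (R.α i) := by
      nth_rewrite 1 [hβeq]; rw [map_smul]
    have hwβcoords : ∀ j, (R.coords (w β) j : ℝ)
        = (R.coords β i : ℝ) * (R.coords (w (R.α i)) j : ℝ) := by
      apply R.toRootSystemData.coords_unique_s7 hwβΦ
      rw [hwβrep]
      nth_rewrite 1 [R.coords_spec _ hwαΦ]
      rw [Finset.smul_sum]
      simp_rw [smul_smul]
    have hwαnn := (R.toRootSystemData.mem_posRoots.mp hwαi).2
    have hwβpos : w β ∈ R.toRootSystemData.posRoots := by
      rw [R.toRootSystemData.mem_posRoots]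
      refine ⟨hwβΦ, fun j => ?_⟩
      have : (0:ℝ) ≤ (R.coords (w β) j : ℝ) := by
        rw [hwβcoords j]
        have h1 : (0:ℝ) ≤ (R.coords β i : ℝ) := by exact_mod_cast hβnn i
        have h2 : (0:ℝ) ≤ (R.coords (w (R.α i)) j : ℝ) := by exact_mod_cast hwαnn j
        exact mul_nonneg h1 h2
      exact_mod_cast this
    refine ⟨hsi, hwβpos, ?_⟩
    rw [hsi, map_neg]
    intro hmem
    have h1 := (R.toRootSystemData.mem_posRoots.mp hmem).2
    have h2 := (R.toRootSystemData.mem_posRoots.mp hwβpos).2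
    apply R.toRootSystemData.eq_zero_of_coords_zero hwβΦ
    intro j
    have h3 := R.toRootSystemData.coords_neg hwβΦ j
    have h4 := h1 j
    have h5 := h2 j
    omega
  set T := S \ M with hT
  have hTmaps : ∀ β ∈ T, R.s i β ∈ T := by
    intro β hβT
    obtain ⟨hβS, hβM⟩ := Finset.mem_sdiff.mp hβT
    have hβS' := hβS
    rw [hS, RootSystemData.mem_suppRoots] at hβS'
    obtain ⟨hβΦ, hβnn, hβsupp⟩ := hβS'
    have hk : ∃ k, k ≠ i ∧ R.coords β k ≠ 0 := by
      by_contra h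
      push_neg at h
      exact hβM (Finset.mem_filter.mpr ⟨hβS, fun j hj => h j hj⟩)
    obtain ⟨k, hki, hk0⟩ := hk
    obtain ⟨hsiΦ, hsicoords⟩ := R.coords_s i hβΦ
    have hkpos : 0 < R.coords (R.s i β) k := by
      rw [hsicoords k hki]; have := hβnn k; omega
    have hsipos := R.toRootSystemData.pos_of_coord_pos hsiΦ hkpos
    rw [Finset.mem_sdiff]
    constructor
    · rw [hS, RootSystemData.mem_suppRoots]
      refine ⟨hsiΦ, (R.toRootSystemData.mem_posRoots.mp hsipos).2, fun j hj => ?_⟩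
      rw [hsicoords j (fun h => hj (h ▸ hiI))]
      exact hβsupp j hj
    · intro hmem
      obtain ⟨_, hloc⟩ := Finset.mem_filter.mp hmem
      exact hk0 (by rw [← hsicoords k hki]; exact hloc k hki)
  have hTimage : T.image (R.s i) = T := by
    apply Finset.eq_of_subset_of_card_le
    · intro x hx
      obtain ⟨β, hβ, rfl⟩ := Finset.mem_image.mp hx
      exact hTmaps β hβ
    · exact le_of_eq (Finset.card_image_of_injective _ (R.s i).injective).symm
  have hsplit : S = M ∪ T := by rw [hT]; exact (Finset.union_sdiff_of_subset hMS).symm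
  have hdisj : Disjoint M T := by rw [hT]; exact Finset.disjoint_sdiff
  have count : ∀ u : E r ≃ₗ[ℝ] E r, R.numInv I u
      = (M.filter fun β => u β ∉ R.toRootSystemData.posRoots).card
        + (T.filter fun β => u β ∉ R.toRootSystemData.posRoots).card := by
    intro u
    have : R.numInv I u
        = (S.filter fun β => u β ∉ R.toRootSystemData.posRoots).card := by rw [hS]; rfl
    rw [this, hsplit, Finset.filter_union,
      Finset.card_union_of_disjoint (Finset.disjoint_filter_filter hdisj)]
  have hMws : M.filter (fun β => (w * R.s i) β ∉ R.toRootSystemData.posRoots) = M := by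
    apply Finset.filter_true_of_mem
    intro β hβ
    exact (hMfacts β hβ).2.2
  have hMw : M.filter (fun β => w β ∉ R.toRootSystemData.posRoots) = ∅ :=
    Finset.filter_false_of_mem (fun β hβ => not_not_intro (hMfacts β hβ).2.1)
  have hTcount : (T.filter fun β => (w * R.s i) β ∉ R.toRootSystemData.posRoots).card
      = (T.filter fun β => w β ∉ R.toRootSystemData.posRoots).card := by
    have key : (T.image (R.s i)).filter (fun γ => w γ ∉ R.toRootSystemData.posRoots)
        = (T.filter fun β => w (R.s i β) ∉ R.toRootSystemData.posRoots).image (R.s i) :=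
      Finset.filter_image
    rw [hTimage] at key
    calc (T.filter fun β => (w * R.s i) β ∉ R.toRootSystemData.posRoots).card
        = ((T.filter fun β => w (R.s i β) ∉ R.toRootSystemData.posRoots).image (R.s i)).card :=
          (Finset.card_image_of_injective _ (R.s i).injective).symm
      _ = (T.filter fun γ => w γ ∉ R.toRootSystemData.posRoots).card := by rw [← key]
  have hle := hw.2 (w * R.s i) hwsiW
  rw [count w, count (w * R.s i), hMws, hMw, hTcount] at hle
  simp only [Finset.card_empty, zero_add] at hle
  have hMpos : 0 < M.card := Finset.card_pos.mpr ⟨R.α i, hαiM⟩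
  omega

end RootSystemW


namespace RootSystemW

variable {r : ℕ} (R : RootSystemW r) {I : Finset (Fin r)}

lemma supp_image_negw {w : E r ≃ₗ[ℝ] E r} (hw : R.IsLongest I w) :
    (R.toRootSystemData.suppRoots I).image (fun β => -(w β))
      = R.toRootSystemData.suppRoots I := by
  apply Finset.eq_of_subset_of_card_le
  · intro x hx
    obtain ⟨β, hβ, rfl⟩ := Finset.mem_image.mp hx
    obtain ⟨hβΦ, hβnn, hβsupp⟩ := R.toRootSystemData.mem_suppRoots.mp hβ
    have hwβΦ : w β ∈ R.Φ := R.WI_maps_phi hw.1 hβΦ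
    have hnot := R.longest_neg hw β hβ
    have hnp := R.toRootSystemData.coords_nonpos_of_not_pos hwβΦ hnot
    rw [RootSystemData.mem_suppRoots]
    refine ⟨R.toRootSystemData.neg_mem _ hwβΦ, fun k => ?_, fun j hj => ?_⟩
    · rw [R.toRootSystemData.coords_neg hwβΦ]; have := hnp k; omega
    · rw [R.toRootSystemData.coords_neg hwβΦ, R.WI_coords hw.1 β hβΦ j hj,
        hβsupp j hj, neg_zero]
  · refine le_of_eq (Finset.card_image_of_injective _ ?_).symm
    exact fun a b h => w.injective (neg_injective h)

lemma sum_supp_w {w : E r ≃ₗ[ℝ] E r} (hw : R.IsLongest I w) :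
    ∑ β ∈ R.toRootSystemData.suppRoots I, w β
      = -∑ β ∈ R.toRootSystemData.suppRoots I, β := by
  have h := R.supp_image_negw hw
  have key : ∑ β ∈ R.toRootSystemData.suppRoots I, β
      = ∑ β ∈ R.toRootSystemData.suppRoots I, -(w β) := by
    conv_lhs => rw [← h]
    exact Finset.sum_image (fun x _ y _ hxy => w.injective (neg_injective hxy))
  rw [Finset.sum_neg_distrib] at key
  rw [key, neg_neg]

lemma sum_phiP_w {w : E r ≃ₗ[ℝ] E r} (hw : R.IsLongest I w) :
    ∑ β ∈ R.toRootSystemData.phiP I, w β = ∑ β ∈ R.toRootSystemData.phiP I, β := by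
  have h := R.WI_image_phiP hw.1 (u := w)
  conv_rhs => rw [← h]
  exact (Finset.sum_image (g := ⇑w) (f := fun x : E r => x) (fun x _ y _ hxy => w.injective hxy)).symm

lemma lam_eq {w : E r ≃ₗ[ℝ] E r} (hw : R.IsLongest I w) {lam : E r}
    (hlam : lam = R.toRootSystemData.rho + w R.toRootSystemData.rho) :
    lam = ∑ β ∈ R.toRootSystemData.phiP I, β := by
  have hsub : R.toRootSystemData.suppRoots I ⊆ R.toRootSystemData.posRoots :=
    Finset.filter_subset _ _
  have hunion : R.toRootSystemData.suppRoots I ∪ R.toRootSystemData.phiP I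
      = R.toRootSystemData.posRoots := Finset.union_sdiff_of_subset hsub
  have hdisj : Disjoint (R.toRootSystemData.suppRoots I) (R.toRootSystemData.phiP I) :=
    Finset.disjoint_sdiff
  have hsum : ∑ β ∈ R.toRootSystemData.posRoots, β
      = ∑ β ∈ R.toRootSystemData.suppRoots I, β + ∑ β ∈ R.toRootSystemData.phiP I, β := by
    rw [← hunion, Finset.sum_union hdisj]
  have hrho : R.toRootSystemData.rho = (2:ℝ)⁻¹ • ∑ β ∈ R.toRootSystemData.posRoots, β := rfl
  have hwrho : w R.toRootSystemData.rho
      = (2:ℝ)⁻¹ • (∑ β ∈ R.toRootSystemData.suppRoots I, w β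
          + ∑ β ∈ R.toRootSystemData.phiP I, w β) := by
    rw [hrho, hsum, map_smul, map_add, map_sum, map_sum]
  rw [hlam, hwrho, R.sum_supp_w hw, R.sum_phiP_w hw, hrho, hsum]
  module

end RootSystemW

/-- For the anticanonical weight `λ = ρ + w_I(ρ)`, the Ehrhart-type product satisfies
the reflexivity functional equation for all `n ∈ ℕ`. -/
theorem stmt7 {r : ℕ} (R : RootSystemW r) (I : Finset (Fin r))
    (w : E r ≃ₗ[ℝ] E r) (hw : R.IsLongest I w)
    (lam : E r) (hlam : lam = R.toRootSystemData.rho + w R.toRootSystemData.rho) :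
    ∀ n : ℕ,
      ∏ β ∈ R.toRootSystemData.phiP I,
        R.toRootSystemData.pairing (((n : ℝ) + 1) • lam - R.toRootSystemData.rho) β /
          R.toRootSystemData.pairing R.toRootSystemData.rho β
      = ∏ β ∈ R.toRootSystemData.phiP I,
          R.toRootSystemData.pairing ((n : ℝ) • lam + R.toRootSystemData.rho) β /
            R.toRootSystemData.pairing R.toRootSystemData.rho β := by
  intro n
  have hwW := hw.1
  have hlamsum := R.lam_eq hw hlam
  have hwlam : w lam = lam := by
    rw [hlamsum, map_sum]
    exact R.sum_phiP_w hw
  have hwinvlam : w⁻¹ lam = lam := by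
    have := congrArg (⇑w⁻¹) hwlam
    rw [show w⁻¹ (w lam) = lam from w.symm_apply_apply lam] at this
    exact this.symm
  have hwinvrho : w⁻¹ R.toRootSystemData.rho = lam - R.toRootSystemData.rho := by
    have h1 : w⁻¹ lam = w⁻¹ (R.toRootSystemData.rho) + R.toRootSystemData.rho := by
      rw [hlam, map_add, show w⁻¹ (w R.toRootSystemData.rho) = R.toRootSystemData.rho
        from w.symm_apply_apply _]
    rw [hwinvlam] at h1
    exact eq_sub_of_add_eq h1.symm
  rw [Finset.prod_div_distrib, Finset.prod_div_distrib]
  congr 1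
  have himg := R.WI_image_phiP hwW (u := w)
  calc ∏ β ∈ R.toRootSystemData.phiP I,
        R.toRootSystemData.pairing (((n : ℝ) + 1) • lam - R.toRootSystemData.rho) β
      = ∏ β ∈ R.toRootSystemData.phiP I,
          R.toRootSystemData.pairing (((n : ℝ) + 1) • lam - R.toRootSystemData.rho) (w β) := by
        conv_lhs => rw [← himg]
        exact Finset.prod_image (fun x _ y _ h => w.injective h)
    _ = ∏ β ∈ R.toRootSystemData.phiP I,
          R.toRootSystemData.pairing ((n : ℝ) • lam + R.toRootSystemData.rho) β := by
        refine Finset.prod_congr rfl fun β _ => ?_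
        unfold RootSystemData.pairing
        have e1 : ⟪w β, w β⟫ = ⟪β, β⟫ := R.WI_inner hwW β β
        have e2 : ⟪((n : ℝ) + 1) • lam - R.toRootSystemData.rho, w β⟫
            = ⟪w⁻¹ (((n : ℝ) + 1) • lam - R.toRootSystemData.rho), β⟫ := by
          have h := R.WI_inner (inv_mem hwW)
            (((n : ℝ) + 1) • lam - R.toRootSystemData.rho) (w β)
          rw [show w⁻¹ (w β) = β from w.symm_apply_apply β] at h
          exact h.symm
        have e3 : w⁻¹ (((n : ℝ) + 1) • lam - R.toRootSystemData.rho)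
            = (n : ℝ) • lam + R.toRootSystemData.rho := by
          rw [map_sub, map_smul, hwinvlam, hwinvrho]
          module
        rw [e1, e2, e3]
end
end

section
/- Let β_{k-1} and α be roots in an irreducible root system with β_k := β_{k-1} + α also a root, and suppose ⟨β_{k-1}, β_{k-1}⟩ / ⟨α, α⟩ is not an integer. Then β_k and β_{k-1} have the same length, ⟨β_k, α^∨⟩ = 1, and ⟨β_{k-1}, α^∨⟩ = -1. -/
open scoped RealInnerProductSpace BigOperators Classical

noncomputable section

/-- If `β` and `a` are roots with `β + a` a root and `⟨β,β⟩/⟨a,a⟩` not an integer,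
then `β + a` and `β` have the same length, `⟨β+a, a^∨⟩ = 1` and `⟨β, a^∨⟩ = -1`. -/
theorem stmt13 {r : ℕ} (R : RootSystemData r) (β a : E r)
    (hβ : β ∈ R.Φ) (ha : a ∈ R.Φ) (hba : β + a ∈ R.Φ)
    (hni : ¬ ∃ n : ℤ, ⟪β, β⟫ / ⟪a, a⟫ = (n : ℝ)) :
    ⟪β + a, β + a⟫ = ⟪β, β⟫ ∧ R.pairing (β + a) a = 1 ∧ R.pairing β a = -1 := by 
  have hA : (0:ℝ) < ⟪a, a⟫ := lt_of_not_ge fun h => R.nonzero a ha (real_inner_self_nonpos.mp h)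
  have hB : (0:ℝ) < ⟪β, β⟫ := lt_of_not_ge fun h => R.nonzero β hβ (real_inner_self_nonpos.mp h)
  have hDpos : (0:ℝ) < ⟪β + a, β + a⟫ := lt_of_not_ge fun h => R.nonzero _ hba (real_inner_self_nonpos.mp h)
  obtain ⟨m, hm⟩ := R.cryst β hβ a ha
  obtain ⟨m', hm'⟩ := R.cryst a ha β hβ
  obtain ⟨n', hn'⟩ := R.cryst a ha _ hba
  rw [div_eq_iff hA.ne'] at hm
  rw [div_eq_iff hB.ne'] at hm'
  rw [div_eq_iff hDpos.ne'] at hn'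
  have hDexp : ⟪β + a, β + a⟫ = ⟪β, β⟫ + 2 * ⟪β, a⟫ + ⟪a, a⟫ := real_inner_add_add_self β a
  have haδ : ⟪a, β + a⟫ = ⟪β, a⟫ + ⟪a, a⟫ := by
    rw [inner_add_right, real_inner_comm]
  have hab : ⟪a, β⟫ = ⟪β, a⟫ := real_inner_comm β a
  rw [hab] at hm'
  rw [haδ, hDexp] at hn'
  have hkey : n' * (m + m * m' + m') = (m + 2) * m' := by
    have hR : ((n' * (m + m * m' + m') : ℤ) : ℝ) * ⟪a, a⟫
        = (((m + 2) * m' : ℤ) : ℝ) * ⟪a, a⟫ := by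
      push_cast
      linear_combination (-(m' : ℝ)) * hn' + (n' : ℝ) * hm'
        + ((m' : ℝ) - (n' : ℝ) * (m' : ℝ) - (n' : ℝ)) * hm
    exact_mod_cast mul_right_cancel₀ hA.ne' hR
  have key : m = -1 := by
    by_cases hm'0 : m' = 0
    · subst hm'0
      have hx : ⟪β, a⟫ = 0 := by push_cast at hm'; linarith
      have hn1 : (n' : ℝ) * (⟪a, a⟫ + ⟪β, β⟫) = 2 * ⟪a, a⟫ := by
        rw [hx] at hn'; linarith [hn']
      have h0 : (0:ℤ) < n' := by
        have : (0:ℝ) < (n' : ℝ) := by nlinarith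
        exact_mod_cast this
      have h2 : n' < 2 := by
        have : (n' : ℝ) < 2 := by nlinarith
        exact_mod_cast this
      have hone : n' = 1 := by omega
      subst hone
      exact absurd ⟨1, by rw [div_eq_iff hA.ne']; push_cast at hn1 ⊢; linarith⟩ hni
    · have hdvd : ¬ m' ∣ m := by
        rintro ⟨k, rfl⟩
        refine hni ⟨k, ?_⟩
        rw [div_eq_iff hA.ne']
        have hm'R : (m' : ℝ) ≠ 0 := Int.cast_ne_zero.mpr hm'0
        have h2 : (m' : ℝ) * ⟪β, β⟫ = (m' : ℝ) * ((k : ℝ) * ⟪a, a⟫) := by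
          push_cast at hm
          linear_combination hm - hm'
        have := mul_left_cancel₀ hm'R h2
        linarith
      have hm0 : m ≠ 0 := by rintro rfl; exact hdvd (dvd_zero m')
      have hprod : (m : ℝ) * (m' : ℝ) * (⟪a, a⟫ * ⟪β, β⟫) = 4 * (⟪β, a⟫ * ⟪β, a⟫) := by
        linear_combination (-2 * ⟪β, a⟫) * hm + (-(m : ℝ) * ⟪a, a⟫) * hm'
      have hC := real_inner_mul_inner_self_le β a
      have h4R : (m : ℝ) * (m' : ℝ) ≤ 4 := by nlinarith [mul_pos hA hB]
      have h4 : m * m' ≤ 4 := by exact_mod_cast h4R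
      have h0R : (0:ℝ) ≤ (m : ℝ) * (m' : ℝ) := by nlinarith [mul_pos hA hB, mul_self_nonneg ⟪β, a⟫]
      have h0 : 0 ≤ m * m' := by exact_mod_cast h0R
      have h1pos : 0 < m * m' := lt_of_le_of_ne h0 (Ne.symm (mul_ne_zero hm0 hm'0))
      have habs : |m'| ≤ 4 := by
        calc |m'| ≤ |m| * |m'| := le_mul_of_one_le_left (abs_nonneg m') (Int.one_le_abs hm0)
        _ = |m * m'| := (abs_mul m m').symm
        _ = m * m' := abs_of_pos h1pos
        _ ≤ 4 := h4
      obtain ⟨hge, hle⟩ := abs_le.mp habs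
      interval_cases m'
      · omega
      · omega
      · rw [show ((-2:ℤ)) = -(2:ℤ) by norm_num, neg_dvd] at hdvd
        omega
      · exact absurd ⟨-m, by ring⟩ hdvd
      · exact absurd rfl hm'0
      · exact absurd ⟨m, by ring⟩ hdvd
      · have hm1 : m = 1 := by omega
        subst hm1; omega
      · have hm1 : m = 1 := by omega
        subst hm1; omega
      · have hm1 : m = 1 := by omega
        subst hm1; omega
  subst key
  push_cast at hm
  refine ⟨by rw [hDexp]; linarith, ?_, ?_⟩
  · have hδa : ⟪β + a, a⟫ = ⟪β, a⟫ + ⟪a, a⟫ := by rw [inner_add_left]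
    rw [RootSystemData.pairing, hδa, div_eq_one_iff_eq hA.ne']
    linarith
  · rw [RootSystemData.pairing, div_eq_iff hA.ne']
    linarith
end
end

section
/- Let Γ ⊆ ℕ × ℤ^d be a finitely generated, saturated monoid such that the real cone generated by Γ is full-dimensional and its intersection with {1} × ℝ^d is bounded. Then the set Δ := {x ∈ ℝ^d : (1, x) ∈ closure(cone(Γ))} is a rational convex polytope whose lattice points are exactly {x ∈ ℤ^d : (1, x) ∈ Γ}. -/
open scoped BigOperators

noncomputable section

/-- The embedding `ℕ × ℤ^d → ℝ × ℝ^d`. -/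
def iota (d : ℕ) : ℕ × (Fin d → ℤ) → ℝ × (Fin d → ℝ) :=
  fun p => ((p.1 : ℝ), fun i => (p.2 i : ℝ))

/-- The convex cone spanned by a set: all nonnegative multiples of points of the convex
hull. -/
def coneOf {d : ℕ} (S : Set (ℝ × (Fin d → ℝ))) : Set (ℝ × (Fin d → ℝ)) :=
  {z | ∃ c : ℝ, 0 ≤ c ∧ ∃ y ∈ convexHull ℝ S, z = c • y}

/-!
Since `Γ` is generated by a finite set `S`, the closed cone over `Γ` is the cone over `S`; the
latter is closed because, by Carathéodory's theorem for cones, it is a finite union of images of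
orthants under injective linear maps. A generator of height zero would be a recession direction of
the bounded slice `Δ`, so it vanishes, and `Δ` is the convex hull of the rescaled generators
`s / s₀`. An integral point `p` of the cone is a nonnegative combination of linearly independent
generators; these coefficients are rational, so some multiple `m • p` lies in `Γ`, and saturation
gives `p ∈ Γ`.
-/

open PointedCone
open scoped Pointwise

section Conic

variable {𝕜 α E : Type*} [Field 𝕜] [LinearOrder 𝕜] [IsStrictOrderedRing 𝕜]
  [AddCommGroup E] [Module 𝕜 E]

lemma PointedCone.mem_hull_image_finset_iff {v : α → E} {s : Finset α} {x : E} :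
    x ∈ hull 𝕜 (v '' s) ↔ ∃ c : α → 𝕜, (∀ i ∈ s, 0 ≤ c i) ∧ ∑ i ∈ s, c i • v i = x := by
  rw [Submodule.mem_span_image_finset_iff_exists_fun']
  constructor
  · rintro ⟨c, rfl⟩
    exact ⟨fun i => c i, fun i _ => (c i).2, rfl⟩
  · rintro ⟨c, hc, rfl⟩
    refine ⟨fun i => ⟨max (c i) 0, le_max_right _ _⟩, Finset.sum_congr rfl fun i hi => ?_⟩
    simp [Nonneg.mk_smul, max_eq_left (hc i hi)]

/-- Moving along a linear relation `∑ g i • v i = 0` as far as the coefficients stay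
nonnegative kills the coefficient attaining `min {c i / g i | g i > 0}`. -/
lemma exists_sum_erase_eq_of_linear_relation [DecidableEq α] (v : α → E) (s : Finset α)
    {c g : α → 𝕜} (hc : ∀ i ∈ s, 0 ≤ c i) (hg : ∑ i ∈ s, g i • v i = 0)
    (hpos : ∃ i ∈ s, 0 < g i) :
    ∃ j ∈ s, ∃ c' : α → 𝕜, (∀ i ∈ s.erase j, 0 ≤ c' i) ∧
      ∑ i ∈ s.erase j, c' i • v i = ∑ i ∈ s, c i • v i := by
  obtain ⟨i₁, hi₁, hgi₁⟩ := hpos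
  obtain ⟨j, hj, hmin⟩ := (s.filter (0 < g ·)).exists_min_image (fun i => c i / g i)
    ⟨i₁, Finset.mem_filter.2 ⟨hi₁, hgi₁⟩⟩
  obtain ⟨hjs, hgj⟩ := Finset.mem_filter.1 hj
  set t := c j / g j
  have ht : 0 ≤ t := div_nonneg (hc j hjs) hgj.le
  have hc' : ∀ i ∈ s, 0 ≤ c i - t * g i := by
    intro i hi
    rcases lt_or_ge 0 (g i) with hgi | hgi
    · have := hmin i (Finset.mem_filter.2 ⟨hi, hgi⟩)
      rw [le_div_iff₀ hgi] at this
      linarith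
    · nlinarith [hc i hi]
  have hcj : c j - t * g j = 0 := by rw [div_mul_cancel₀ _ hgj.ne', sub_self]
  refine ⟨j, hjs, fun i => c i - t * g i, fun i hi => hc' i (Finset.mem_of_mem_erase hi), ?_⟩
  rw [Finset.sum_erase _ (by simp only [hcj, zero_smul])]
  simp only [sub_smul, Finset.sum_sub_distrib, mul_smul, ← Finset.smul_sum, hg, smul_zero,
    sub_zero]

lemma exists_linearIndependent_sum_eq (v : α → E) (s : Finset α) {c : α → 𝕜}
    (hc : ∀ i ∈ s, 0 ≤ c i) :
    ∃ t ⊆ s, LinearIndependent 𝕜 (fun i : t => v i) ∧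
      ∃ b : α → 𝕜, (∀ i ∈ t, 0 ≤ b i) ∧ ∑ i ∈ t, b i • v i = ∑ i ∈ s, c i • v i := by
  classical
  induction s using Finset.strongInduction generalizing c with
  | H s ih =>
  by_cases hind : LinearIndependent 𝕜 (fun i : s => v i)
  · exact ⟨s, subset_rfl, hind, c, hc, rfl⟩
  obtain ⟨g, hg, i₀, hi₀⟩ := Fintype.not_linearIndependent_iff.1 hind
  set g' : α → 𝕜 := fun i => if h : i ∈ s then g ⟨i, h⟩ else 0
  have hg' : ∑ i ∈ s, g' i • v i = 0 := by
    rw [← hg, ← Finset.sum_coe_sort s]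
    simp [g']
  have hpos : ∃ g'' : α → 𝕜, ∑ i ∈ s, g'' i • v i = 0 ∧ ∃ i ∈ s, 0 < g'' i := by
    rcases (show g' i₀ ≠ 0 by simpa [g'] using hi₀).lt_or_gt with hneg | hpos
    · exact ⟨-g', by simp [neg_smul, hg'], i₀, i₀.2, by simpa using hneg⟩
    · exact ⟨g', hg', i₀, i₀.2, hpos⟩
  obtain ⟨g'', hg'', hpos''⟩ := hpos
  obtain ⟨j, hj, c', hc', hsum⟩ := exists_sum_erase_eq_of_linear_relation v s hc hg'' hpos''
  obtain ⟨t, hts, ht, b, hb, hbsum⟩ := ih _ (Finset.erase_ssubset hj) hc'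
  exact ⟨t, hts.trans (Finset.erase_subset _ _), ht, b, hb, hbsum.trans hsum⟩

end Conic

section Closed

variable {α E : Type*} [AddCommGroup E] [Module ℝ E] [TopologicalSpace E]
  [IsTopologicalAddGroup E] [ContinuousSMul ℝ E] [T2Space E]

lemma isClosed_image_nonneg_of_linearIndependent {ι : Type*} [Fintype ι] {w : ι → E}
    (hw : LinearIndependent ℝ w) :
    IsClosed (Fintype.linearCombination ℝ w '' Set.Ici 0) :=
  (LinearMap.isClosedEmbedding_of_injective (LinearMap.ker_eq_bot.2
    (linearIndependent_iff_injective_fintypeLinearCombination.1 hw))).isClosedMap _ isClosed_Ici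

theorem PointedCone.isClosed_hull_image_finset (v : α → E) (s : Finset α) :
    IsClosed (hull ℝ (v '' s) : Set E) := by
  classical
  have hunion : (hull ℝ (v '' s) : Set E) =
      ⋃ t ∈ s.powerset.filter (fun t : Finset α => LinearIndependent ℝ (fun i : t => v i)),
        Fintype.linearCombination ℝ (fun i : t => v i) '' Set.Ici 0 := by
    ext x
    simp only [Set.mem_iUnion, Finset.mem_filter, Finset.mem_powerset, exists_prop,
      Set.mem_image, Set.mem_Ici, Fintype.linearCombination_apply]
    constructor
    · intro hx
      obtain ⟨c, hc, rfl⟩ := mem_hull_image_finset_iff.1 hx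
      obtain ⟨t, hts, ht, b, hb, hbsum⟩ := exists_linearIndependent_sum_eq v s hc
      exact ⟨t, ⟨hts, ht⟩, fun i => b i, fun i => hb i i.2,
        by rw [← hbsum, Finset.sum_coe_sort t (fun i => b i • v i)]⟩
    · rintro ⟨t, ⟨hts, -⟩, b, hb, rfl⟩
      exact Submodule.sum_mem _ fun i _ =>
        (hull ℝ _).smul_mem (hb i) (subset_hull ⟨i, hts i.2, rfl⟩)
  rw [hunion]
  exact isClosed_biUnion_finset fun t ht =>
    isClosed_image_nonneg_of_linearIndependent (Finset.mem_filter.1 ht).2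

end Closed

lemma coneOf_eq_hull {d : ℕ} {S : Set (ℝ × (Fin d → ℝ))} (hS : S.Nonempty) :
    coneOf S = hull ℝ S := by
  apply Set.Subset.antisymm
  · rintro _ ⟨c, hc, y, hy, rfl⟩
    exact (hull ℝ S).smul_mem hc (convexHull_min subset_hull (hull ℝ S).convex hy)
  · intro x hx
    induction hx using Submodule.span_induction with
    | mem x hx => exact ⟨1, zero_le_one, x, subset_convexHull ℝ S hx, (one_smul ℝ x).symm⟩
    | zero =>
      obtain ⟨y, hy⟩ := hS
      exact ⟨0, le_rfl, y, subset_convexHull ℝ S hy, (zero_smul ℝ y).symm⟩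
    | add x x' _ _ hx hx' =>
      obtain ⟨a, ha, y, hy, rfl⟩ := hx
      obtain ⟨a', ha', y', hy', rfl⟩ := hx'
      obtain ⟨z, hz, hxz⟩ : a • y + a' • y' ∈ (a + a') • convexHull ℝ S := by
        rw [(convex_convexHull ℝ S).add_smul ha ha']
        exact Set.add_mem_add (Set.smul_mem_smul_set hy) (Set.smul_mem_smul_set hy')
      exact ⟨a + a', add_nonneg ha ha', z, hz, hxz.symm⟩
    | smul r x _ hx =>
      obtain ⟨a, ha, y, hy, rfl⟩ := hx
      exact ⟨r * a, mul_nonneg r.2 ha, y, hy, (mul_smul (r : ℝ) a y).symm⟩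

lemma PointedCone.hull_image_closure {𝕜 M E : Type*} [Semiring 𝕜] [PartialOrder 𝕜]
    [IsOrderedRing 𝕜] [AddMonoid M] [AddCommMonoid E] [Module 𝕜 E] (f : M →+ E) (s : Set M) :
    hull 𝕜 (f '' AddSubmonoid.closure s) = hull 𝕜 (f '' s) := by
  refine le_antisymm (Submodule.span_le.2 ?_) (Submodule.span_mono (Set.image_mono
    AddSubmonoid.subset_closure))
  rintro _ ⟨x, hx, rfl⟩
  induction hx using AddSubmonoid.closure_induction with
  | mem x hx => exact subset_hull ⟨x, hx, rfl⟩
  | zero => simp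
  | add x y _ _ hx hy => simpa using add_mem hx hy

lemma eq_zero_of_forall_add_smul_mem {F : Type*} [NormedAddCommGroup F] [NormedSpace ℝ F]
    {B : Set F} (hB : Bornology.IsBounded B) {x u : F} (h : ∀ t : ℝ, 0 ≤ t → x + t • u ∈ B) :
    u = 0 := by
  by_contra hu
  obtain ⟨R, hR⟩ := isBounded_iff_forall_norm_le.1 hB
  have hu' : 0 < ‖u‖ := norm_pos_iff.2 hu
  have hxR : ‖x‖ ≤ R := by simpa using hR _ (h 0 le_rfl)
  set t := (R + ‖x‖ + 1) / ‖u‖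
  have ht : 0 ≤ t := div_nonneg (by linarith [norm_nonneg x]) hu'.le
  have htu : t * ‖u‖ ≤ ‖x + t • u‖ + ‖x‖ := by
    simpa [norm_smul, Real.norm_of_nonneg ht] using norm_sub_le (x + t • u) x
  rw [div_mul_cancel₀ _ hu'.ne'] at htu
  linarith [hR _ (h t ht)]

section Slice

variable {F : Type*} [NormedAddCommGroup F] [NormedSpace ℝ F]

lemma PointedCone.eq_zero_of_isBounded_slice {C : PointedCone ℝ (ℝ × F)}
    (hC : Bornology.IsBounded {x : F | ((1 : ℝ), x) ∈ C}) {x u : F} (hx : ((1 : ℝ), x) ∈ C)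
    (hu : ((0 : ℝ), u) ∈ C) : u = 0 :=
  eq_zero_of_forall_add_smul_mem hC fun t ht => by simpa using C.add_mem hx (C.smul_mem ht hu)

lemma PointedCone.convex_slice (C : PointedCone ℝ (ℝ × F)) :
    Convex ℝ {x : F | ((1 : ℝ), x) ∈ C} := by
  intro x hx y hy a b ha hb hab
  simpa [hab] using C.convex hx hy ha hb hab

theorem PointedCone.slice_hull_image_finset_eq_convexHull {α : Type*} (v : α → ℝ × F)
    (s : Finset α) (hv : ∀ i ∈ s, 0 ≤ (v i).1)
    (hbdd : Bornology.IsBounded {x : F | ((1 : ℝ), x) ∈ hull ℝ (v '' s)}) :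
    {x : F | ((1 : ℝ), x) ∈ hull ℝ (v '' s)} =
      convexHull ℝ ((fun i => (v i).1⁻¹ • (v i).2) '' ↑(s.filter fun i => (v i).1 ≠ 0)) := by
  classical
  apply Set.Subset.antisymm
  · intro x hx
    obtain ⟨c, hc, hcx⟩ := mem_hull_image_finset_iff.1 hx
    have hsum : ∑ i ∈ s.filter (fun i => (v i).1 ≠ 0), c i • v i = ((1 : ℝ), x) := by
      rw [Finset.sum_filter_of_ne, hcx]
      intro i hi hne h0
      have hvi : ((v i).1, (v i).2) ∈ hull ℝ (v '' s) := subset_hull ⟨i, hi, rfl⟩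
      rw [h0] at hvi
      have h2 : (v i).2 = 0 := eq_zero_of_isBounded_slice hbdd hx hvi
      exact hne (by rw [show v i = 0 from Prod.ext h0 h2, smul_zero])
    have hfst : ∑ i ∈ s.filter (fun i => (v i).1 ≠ 0), c i * (v i).1 = 1 := by
      simpa [Prod.fst_sum] using congrArg Prod.fst hsum
    have hsnd : ∑ i ∈ s.filter (fun i => (v i).1 ≠ 0), c i • (v i).2 = x := by
      simpa [Prod.snd_sum] using congrArg Prod.snd hsum
    have hx : (s.filter fun i => (v i).1 ≠ 0).centerMass (fun i => c i * (v i).1)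
        (fun i => (v i).1⁻¹ • (v i).2) = x := by
      rw [Finset.centerMass_eq_of_sum_1 _ _ hfst, ← hsnd]
      refine Finset.sum_congr rfl fun i hi => ?_
      rw [smul_smul, mul_assoc, mul_inv_cancel₀ (Finset.mem_filter.1 hi).2, mul_one]
    rw [← hx]
    refine Finset.centerMass_mem_convexHull _ (fun i hi => ?_) (by rw [hfst]; exact one_pos)
      fun i hi => Set.mem_image_of_mem _ hi
    obtain ⟨his, -⟩ := Finset.mem_filter.1 hi
    exact mul_nonneg (hc i his) (hv i his)
  · refine convexHull_min ?_ (convex_slice _)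
    rintro _ ⟨i, hi, rfl⟩
    obtain ⟨his, hne⟩ := Finset.mem_filter.1 hi
    have h : ((1 : ℝ), (v i).1⁻¹ • (v i).2) = (v i).1⁻¹ • v i :=
      Prod.ext (inv_mul_cancel₀ hne).symm rfl
    rw [Set.mem_ofPred_eq, h]
    exact (hull ℝ _).smul_mem (inv_nonneg.2 (hv i his)) (subset_hull ⟨i, his, rfl⟩)

end Slice

/-- `p` and the `v i` are linearly dependent over `ℝ`, hence over `ℤ`
(`linearIndependent_algebraMap_comp_iff`); solving the integer relation for `p` shows that the
unique coefficients `b i` are rational with a common denominator. -/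
theorem exists_nat_mul_eq_natCast_of_linearIndependent {ι κ : Type*} [Fintype ι] [Finite κ]
    {v : ι → κ → ℤ} {p : κ → ℤ} {b : ι → ℝ} (hb : ∀ i, 0 ≤ b i)
    (hv : LinearIndependent ℝ fun i => (Int.cast ∘ v i : κ → ℝ))
    (hp : ∑ i, b i • (Int.cast ∘ v i : κ → ℝ) = Int.cast ∘ p) :
    ∃ m : ℕ, 0 < m ∧ ∀ i, ∃ n : ℕ, (m : ℝ) * b i = n := by
  classical
  have hdep : ¬ LinearIndependent ℤ (fun o : Option ι => o.elim p v) := by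
    rw [← linearIndependent_algebraMap_comp_iff (S := ℝ), Fintype.not_linearIndependent_iff]
    refine ⟨fun o => o.elim (-1) b, ?_, none, by simp⟩
    rw [Fintype.sum_option]
    simpa [algebraMap_int_eq, neg_add_eq_zero] using hp.symm
  obtain ⟨a, ha, i₀, hi₀⟩ := Fintype.not_linearIndependent_iff.1 hdep
  rw [Fintype.sum_option] at ha
  have hcoef : ∀ i, (a none : ℝ) * b i + a (some i) = 0 := by
    refine Fintype.linearIndependent_iff.1 hv _ ?_
    funext k
    have hk := congrArg (fun f => ((f k : ℤ) : ℝ)) ha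
    have hpk := congrFun hp k
    simp only [Finset.sum_apply, Pi.smul_apply, Function.comp_apply, smul_eq_mul] at hk hpk ⊢
    simp only [add_mul, Finset.sum_add_distrib, mul_assoc, ← Finset.mul_sum, hpk]
    simpa using hk
  have hnone : a none ≠ 0 := by
    intro h0
    cases i₀ with
    | none => exact hi₀ h0
    | some i =>
      have : (a (some i) : ℝ) = 0 := by simpa [h0] using hcoef i
      exact hi₀ (by exact_mod_cast this)
  refine ⟨(a none).natAbs, Int.natAbs_pos.2 hnone, fun i => ⟨(a (some i)).natAbs, ?_⟩⟩
  rw [Nat.cast_natAbs, Nat.cast_natAbs, Int.cast_abs, Int.cast_abs, ← abs_of_nonneg (hb i),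
    ← abs_mul, eq_neg_of_add_eq_zero_left (hcoef i), abs_neg]

section Lattice

variable {d : ℕ}

def iotaHom (d : ℕ) : ℕ × (Fin d → ℤ) →+ ℝ × (Fin d → ℝ) :=
  (Nat.castAddMonoidHom ℝ).prodMap ((Int.castAddHom ℝ).compLeft (Fin d))

lemma coe_iotaHom : ⇑(iotaHom d) = iota d := rfl

lemma iota_injective : Function.Injective (iota d) := fun _ _ h =>
  Prod.ext (Nat.cast_injective (congrArg Prod.fst h))
    (funext fun i => Int.cast_injective (congrFun (congrArg Prod.snd h) i))

lemma piOptionEquivProd_symm_iota (p : ℕ × (Fin d → ℤ)) :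
    (LinearEquiv.piOptionEquivProd (R := ℝ)).symm (iota d p) =
      (Int.cast ∘ fun o : Option (Fin d) => o.elim (p.1 : ℤ) p.2 : Option (Fin d) → ℝ) := by
  funext o
  cases o <;> simp [iota, LinearEquiv.piOptionEquivProd]

theorem mem_of_iota_mem_hull {Γ : AddSubmonoid (ℕ × (Fin d → ℤ))} {S : Finset (ℕ × (Fin d → ℤ))}
    (hS : AddSubmonoid.closure (S : Set _) = Γ)
    (hsat : ∀ (m : ℕ) (x : ℕ × (Fin d → ℤ)), 0 < m → m • x ∈ Γ → x ∈ Γ)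
    {p : ℕ × (Fin d → ℤ)} (hp : iota d p ∈ hull ℝ (iota d '' S)) : p ∈ Γ := by
  obtain ⟨c, hc, hcp⟩ := mem_hull_image_finset_iff.1 hp
  obtain ⟨T, hTS, hT, b, hb, hbp⟩ := exists_linearIndependent_sum_eq (iota d) S hc
  set e := (LinearEquiv.piOptionEquivProd (R := ℝ) (ι := Fin d) (M := fun _ => ℝ)).symm
  obtain ⟨m, hm, hn⟩ := exists_nat_mul_eq_natCast_of_linearIndependent
    (v := fun i : T => fun o : Option (Fin d) => o.elim ((i : ℕ × (Fin d → ℤ)).1 : ℤ) i.1.2)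
    (p := fun o => o.elim (p.1 : ℤ) p.2) (b := fun i : T => b i) (fun i => hb i i.2)
    (by simpa [e, Function.comp_def, piOptionEquivProd_symm_iota] using
      hT.map' e.toLinearMap e.ker)
    (by
      have := congrArg e hbp
      rw [← Finset.sum_coe_sort T, map_sum, hcp] at this
      simpa [e, piOptionEquivProd_symm_iota] using this)
  choose n hn using hn
  have hmp : m • p = ∑ i : T, n i • (i : ℕ × (Fin d → ℤ)) := by
    apply iota_injective
    simp only [← coe_iotaHom, map_nsmul, map_sum, ← Nat.cast_smul_eq_nsmul ℝ, ← hn, mul_smul,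
      ← Finset.smul_sum]
    rw [coe_iotaHom, Finset.sum_coe_sort T (fun i => b i • iota d i), hbp, hcp]
  exact hsat m p hm (hmp ▸ sum_mem fun i _ =>
    AddSubmonoid.nsmul_mem _ (hS ▸ AddSubmonoid.subset_closure (hTS i.2)) _)

end Lattice

theorem stmt19_general {d : ℕ} (Γ : AddSubmonoid (ℕ × (Fin d → ℤ)))
    (hfg : ∃ S : Finset (ℕ × (Fin d → ℤ)), AddSubmonoid.closure (S : Set _) = Γ)
    (hsat : ∀ (m : ℕ) (x : ℕ × (Fin d → ℤ)), 0 < m → m • x ∈ Γ → x ∈ Γ)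
    (Δ : Set (Fin d → ℝ))
    (hΔ : Δ = {x | ((1 : ℝ), x) ∈ closure (coneOf (iota d '' (Γ : Set _)))})
    (hbdd : Bornology.IsBounded Δ) :
    (∃ V : Finset (Fin d → ℝ),
        (∀ v ∈ V, ∀ i, ∃ q : ℚ, v i = (q : ℝ)) ∧ Δ = convexHull ℝ (V : Set _)) ∧
    (∀ x : Fin d → ℤ, ((fun i => (x i : ℝ)) ∈ Δ ↔ ((1 : ℕ), x) ∈ Γ)) := by
  obtain ⟨S, hS⟩ := hfg
  have hcone : hull ℝ (iota d '' (Γ : Set _)) = hull ℝ (iota d '' S) := by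
    rw [← hS, ← coe_iotaHom, hull_image_closure]
  rw [coneOf_eq_hull (Set.Nonempty.image _ ⟨0, Γ.zero_mem⟩), hcone,
    (isClosed_hull_image_finset _ _).closure_eq] at hΔ
  subst hΔ
  refine ⟨⟨(S.filter fun p => (iota d p).1 ≠ 0).image fun p => (iota d p).1⁻¹ • (iota d p).2,
    ?_, ?_⟩, fun x => ?_⟩
  · simp only [Finset.mem_image]
    rintro _ ⟨p, -, rfl⟩ i
    exact ⟨(p.2 i : ℚ) / (p.1 : ℚ), by simp [iota, div_eq_inv_mul]⟩
  · rw [Finset.coe_image]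
    exact slice_hull_image_finset_eq_convexHull (iota d) S (fun p _ => Nat.cast_nonneg _) hbdd
  · have hx : ((1 : ℝ), fun i => (x i : ℝ)) = iota d (1, x) := by simp [iota]
    rw [Set.mem_ofPred_eq, hx]
    exact ⟨mem_of_iota_mem_hull hS hsat, fun h => hcone ▸ subset_hull ⟨_, h, rfl⟩⟩

/-- If `Γ ⊆ ℕ × ℤ^d` is a finitely generated saturated monoid whose real cone is
full-dimensional and whose slice at height `1` is bounded, then
`Δ = {x : (1,x) ∈ closure(cone Γ)}` is a rational convex polytope whose lattice points
are exactly the degree-one elements of `Γ`. -/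
theorem stmt19 {d : ℕ} (Γ : AddSubmonoid (ℕ × (Fin d → ℤ)))
    (hfg : ∃ S : Finset (ℕ × (Fin d → ℤ)), AddSubmonoid.closure (S : Set _) = Γ)
    (hsat : ∀ (m : ℕ) (x : ℕ × (Fin d → ℤ)), 0 < m → m • x ∈ Γ → x ∈ Γ)
    (hfull : Submodule.span ℝ (iota d '' (Γ : Set _)) = ⊤)
    (Δ : Set (Fin d → ℝ))
    (hΔ : Δ = {x | ((1 : ℝ), x) ∈ closure (coneOf (iota d '' (Γ : Set _)))})
    (hbdd : Bornology.IsBounded Δ) :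
    (∃ V : Finset (Fin d → ℝ),
        (∀ v ∈ V, ∀ i, ∃ q : ℚ, v i = (q : ℝ)) ∧ Δ = convexHull ℝ (V : Set _)) ∧
    (∀ x : Fin d → ℤ, ((fun i => (x i : ℝ)) ∈ Δ ↔ ((1 : ℕ), x) ∈ Γ)) :=
  stmt19_general Γ hfg hsat Δ hΔ hbdd
end
end
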